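/- Let X be an X-valued random variable (principal variate), Û a U-valued random variable (control variate), and U an ancillary U-valued random variable uncorrelated with X and Û satisfying E[U] = E[Û]. For the total variate Z = X - S(Û - U), the linear gain S minimizing the trace of the covariance of Z is S = Cov(X, Û) (Cov(Û, Û) + Cov(U, U))^{-1}. -/

import Mathlib

open MeasureTheory Matrix

/-- Component-wise mean of a random vector. -/
noncomputable def rmean {Ω : Type*} [MeasureSpace Ω] {ι : Type*}
    (X : Ω → ι → ℝ) : ι → ℝ := fun i => ∫ ω, X ω i

/-- Covariance matrix of two random vectors. -/
noncomputable def rcov {Ω : Type*} [MeasureSpace Ω] {ι κ : Type*}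
    (X : Ω → ι → ℝ) (Y : Ω → κ → ℝ) : Matrix ι κ ℝ :=
  Matrix.of fun i j => ∫ ω, (X ω i - rmean X i) * (Y ω j - rmean Y j)

/-!
Put `W = Û - U`, so that `Z S = X - S W`. Since `U` is uncorrelated with `X` and `Û`,
`Cov(X, W) = Cov(X, Û)` and `Cov(W, W) = Cov(Û, Û) + Cov(U, U)`, so the proposed gain is the
regression gain `S₀ = Cov(X, W) Cov(W, W)⁻¹`, whose residual `Z S₀` is uncorrelated with `W`.
Writing `Z S = Z S₀ - (S - S₀) W`, the cross terms vanish and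
`Cov(Z S) = Cov(Z S₀) + Cov((S - S₀) W)`, a covariance matrix with nonnegative trace.
-/

open ProbabilityTheory

section RandomVector

variable {Ω : Type*} [MeasureSpace Ω] {ι κ ν : Type*}

lemma rcov_apply (X : Ω → ι → ℝ) (Y : Ω → κ → ℝ) (i : ι) (j : κ) :
    rcov X Y i j = cov[fun ω => X ω i, fun ω => Y ω j] := rfl

lemma rcov_transpose (X : Ω → ι → ℝ) (Y : Ω → κ → ℝ) : (rcov X Y)ᵀ = rcov Y X := by
  ext i j
  exact covariance_comm _ _

lemma trace_rcov_self_nonneg [Fintype ι] (X : Ω → ι → ℝ) : 0 ≤ (rcov X X).trace :=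
  Finset.sum_nonneg fun _ _ => integral_nonneg fun _ => mul_self_nonneg _

lemma memLp_mulVec [Fintype ι] (M : Matrix κ ι ℝ) {X : Ω → ι → ℝ}
    (hX : ∀ i, MemLp (fun ω => X ω i) 2) (k : κ) :
    MemLp (fun ω => (M *ᵥ X ω) k) 2 :=
  memLp_finsetSum _ fun i _ => (hX i).const_mul (M k i)

variable [IsFiniteMeasure (volume : Measure Ω)]

lemma rcov_sub_left {X X' : Ω → ι → ℝ} {Y : Ω → κ → ℝ}
    (hX : ∀ i, MemLp (fun ω => X ω i) 2) (hX' : ∀ i, MemLp (fun ω => X' ω i) 2)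
    (hY : ∀ j, MemLp (fun ω => Y ω j) 2) :
    rcov (fun ω => X ω - X' ω) Y = rcov X Y - rcov X' Y := by
  ext i j
  exact covariance_fun_sub_left (hX i) (hX' i) (hY j)

lemma rcov_sub_right {X : Ω → ι → ℝ} {Y Y' : Ω → κ → ℝ}
    (hX : ∀ i, MemLp (fun ω => X ω i) 2)
    (hY : ∀ j, MemLp (fun ω => Y ω j) 2) (hY' : ∀ j, MemLp (fun ω => Y' ω j) 2) :
    rcov X (fun ω => Y ω - Y' ω) = rcov X Y - rcov X Y' := by
  ext i j
  exact covariance_fun_sub_right (hX i) (hY j) (hY' j)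

lemma rcov_mulVec_left [Fintype ι] (M : Matrix ν ι ℝ) {X : Ω → ι → ℝ} {Y : Ω → κ → ℝ}
    (hX : ∀ i, MemLp (fun ω => X ω i) 2) (hY : ∀ j, MemLp (fun ω => Y ω j) 2) :
    rcov (fun ω => M *ᵥ X ω) Y = M * rcov X Y := by
  ext k j
  simp only [rcov_apply, Matrix.mulVec, dotProduct, Matrix.mul_apply]
  rw [covariance_fun_sum_left (fun i => (hX i).const_mul (M k i)) (hY j)]
  simp only [covariance_const_mul_left]

lemma rcov_mulVec_right [Fintype κ] (M : Matrix ν κ ℝ) {X : Ω → ι → ℝ} {Y : Ω → κ → ℝ}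
    (hX : ∀ i, MemLp (fun ω => X ω i) 2) (hY : ∀ j, MemLp (fun ω => Y ω j) 2) :
    rcov X (fun ω => M *ᵥ Y ω) = rcov X Y * Mᵀ := by
  rw [← rcov_transpose, rcov_mulVec_left M hY hX, Matrix.transpose_mul, rcov_transpose]

end RandomVector

section LinearEstimation

variable {Ω : Type*} [MeasureSpace Ω] [IsFiniteMeasure (volume : Measure Ω)]
  {ι κ : Type*} [Fintype κ] {X : Ω → ι → ℝ} {W : Ω → κ → ℝ}

lemma rcov_residual_eq_add (hX : ∀ i, MemLp (fun ω => X ω i) 2)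
    (hW : ∀ k, MemLp (fun ω => W ω k) 2) {S₀ : Matrix ι κ ℝ}
    (horth : rcov (fun ω => X ω - S₀ *ᵥ W ω) W = 0) (S : Matrix ι κ ℝ) :
    rcov (fun ω => X ω - S *ᵥ W ω) (fun ω => X ω - S *ᵥ W ω)
      = rcov (fun ω => X ω - S₀ *ᵥ W ω) (fun ω => X ω - S₀ *ᵥ W ω)
        + rcov (fun ω => (S - S₀) *ᵥ W ω) (fun ω => (S - S₀) *ᵥ W ω) := by
  set R₀ := fun ω => X ω - S₀ *ᵥ W ω
  set D := fun ω => (S - S₀) *ᵥ W ω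
  have hR₀ : ∀ i, MemLp (fun ω => R₀ ω i) 2 := fun i => (hX i).sub (memLp_mulVec S₀ hW i)
  have hD : ∀ i, MemLp (fun ω => D ω i) 2 := memLp_mulVec (S - S₀) hW
  have hsplit : (fun ω => X ω - S *ᵥ W ω) = fun ω => R₀ ω - D ω := by
    funext ω
    simp only [R₀, D, Matrix.sub_mulVec]
    abel
  have hR₀D : rcov R₀ D = 0 := by
    rw [rcov_mulVec_right _ hR₀ hW, horth, Matrix.zero_mul]
  have hDR₀ : rcov D R₀ = 0 := by
    rw [← rcov_transpose, hR₀D, Matrix.transpose_zero]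
  have hR₀subD : ∀ i, MemLp (fun ω => (R₀ ω - D ω) i) 2 := fun i => (hR₀ i).sub (hD i)
  rw [hsplit, rcov_sub_left (Y := fun ω => R₀ ω - D ω) hR₀ hD hR₀subD, rcov_sub_right hR₀ hR₀ hD,
    rcov_sub_right hD hR₀ hD, hR₀D, hDR₀]
  abel

lemma trace_rcov_residual_le [Fintype ι] (hX : ∀ i, MemLp (fun ω => X ω i) 2)
    (hW : ∀ k, MemLp (fun ω => W ω k) 2) {S₀ : Matrix ι κ ℝ}
    (horth : rcov (fun ω => X ω - S₀ *ᵥ W ω) W = 0) (S : Matrix ι κ ℝ) :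
    (rcov (fun ω => X ω - S₀ *ᵥ W ω) (fun ω => X ω - S₀ *ᵥ W ω)).trace
      ≤ (rcov (fun ω => X ω - S *ᵥ W ω) (fun ω => X ω - S *ᵥ W ω)).trace := by
  rw [rcov_residual_eq_add hX hW horth S, Matrix.trace_add]
  exact le_add_of_nonneg_right (trace_rcov_self_nonneg _)

lemma rcov_residual_eq_zero_of_isUnit [DecidableEq κ] (hX : ∀ i, MemLp (fun ω => X ω i) 2)
    (hW : ∀ k, MemLp (fun ω => W ω k) 2) (hinv : IsUnit (rcov W W)) :
    rcov (fun ω => X ω - (rcov X W * (rcov W W)⁻¹) *ᵥ W ω) W = 0 := by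
  rw [rcov_sub_left hX (memLp_mulVec _ hW) hW, rcov_mulVec_left _ hW hW, Matrix.mul_assoc,
    Matrix.nonsing_inv_mul _ ((Matrix.isUnit_iff_isUnit_det _).mp hinv), Matrix.mul_one,
    sub_self]

end LinearEstimation

theorem optimal_gain_general
    {Ω : Type*} [MeasureSpace Ω] [IsProbabilityMeasure (volume : Measure Ω)]
    {n r : ℕ}
    (X : Ω → Fin n → ℝ) (Uhat U : Ω → Fin r → ℝ)
    (hX : ∀ i, MemLp (fun ω => X ω i) 2) (hUhat : ∀ i, MemLp (fun ω => Uhat ω i) 2)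
    (hU : ∀ i, MemLp (fun ω => U ω i) 2)
    (huncorrX : rcov U X = 0) (huncorrUhat : rcov U Uhat = 0)
    (hinv : IsUnit (rcov Uhat Uhat + rcov U U))
    (Z : Matrix (Fin n) (Fin r) ℝ → Ω → Fin n → ℝ)
    (hZ : ∀ S ω, Z S ω = X ω - S.mulVec (Uhat ω - U ω)) :
    ∀ S : Matrix (Fin n) (Fin r) ℝ,
      (rcov (Z (rcov X Uhat * (rcov Uhat Uhat + rcov U U)⁻¹))
            (Z (rcov X Uhat * (rcov Uhat Uhat + rcov U U)⁻¹))).trace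
        ≤ (rcov (Z S) (Z S)).trace := by
  set W : Ω → Fin r → ℝ := fun ω => Uhat ω - U ω
  have hW : ∀ k, MemLp (fun ω => W ω k) 2 := fun k => (hUhat k).sub (hU k)
  have hXW : rcov X W = rcov X Uhat := by
    rw [rcov_sub_right hX hUhat hU, ← rcov_transpose U X, huncorrX, Matrix.transpose_zero,
      sub_zero]
  have hWW : rcov W W = rcov Uhat Uhat + rcov U U := by
    rw [rcov_sub_left hUhat hU hW, rcov_sub_right hUhat hUhat hU, rcov_sub_right hU hUhat hU,
      ← rcov_transpose U Uhat, huncorrUhat]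
    simp
  have hZ' : Z = fun S ω => X ω - S *ᵥ W ω := funext fun S => funext (hZ S)
  rw [hZ', ← hXW, ← hWW]
  intro S
  exact trace_rcov_residual_le hX hW (rcov_residual_eq_zero_of_isUnit hX hW (hWW ▸ hinv)) S

/-- **Optimal gain (Lemma 1).** Among all gain matrices `S`, the total variate
`Z = X - S (Û - U)` has minimal trace of covariance for
`S = Cov(X,Û) (Cov(Û,Û) + Cov(U,U))⁻¹`. -/
theorem optimal_gain
    {Ω : Type*} [MeasureSpace Ω] [IsProbabilityMeasure (volume : Measure Ω)]
    {n r : ℕ}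
    (X : Ω → Fin n → ℝ) (Uhat U : Ω → Fin r → ℝ)
    (hX : ∀ i, MemLp (fun ω => X ω i) 2) (hUhat : ∀ i, MemLp (fun ω => Uhat ω i) 2)
    (hU : ∀ i, MemLp (fun ω => U ω i) 2)
    (hmean : rmean U = rmean Uhat)
    (huncorrX : rcov U X = 0) (huncorrUhat : rcov U Uhat = 0)
    (hinv : IsUnit (rcov Uhat Uhat + rcov U U))
    (Z : Matrix (Fin n) (Fin r) ℝ → Ω → Fin n → ℝ)
    (hZ : ∀ S ω, Z S ω = X ω - S.mulVec (Uhat ω - U ω)) :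
    ∀ S : Matrix (Fin n) (Fin r) ℝ,
      (rcov (Z (rcov X Uhat * (rcov Uhat Uhat + rcov U U)⁻¹))
            (Z (rcov X Uhat * (rcov Uhat Uhat + rcov U U)⁻¹))).trace
        ≤ (rcov (Z S) (Z S)).trace :=
  optimal_gain_general X Uhat U hX hUhat hU huncorrX huncorrUhat hinv Z hZ
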